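/- arXiv:math/0701496 — 2 statements merged into one kernel-verified Lean document; each statement's English description precedes it below -/
import Mathlib

section
/- Let F be a continuous function on an open disc D ⊂ ℂ that is holomorphic on the complement of a smooth arc γ ⊂ D (i.e. F is holomorphic on each of the two open components of D \ γ and continuous across γ). Then F is holomorphic on all of D. -/
/-!
By Morera's theorem it suffices that the integral of `F` around every rectangle in the disc
vanishes. Fix such a rectangle `[a, b] × [c, d]` and let `Φ x` be the integral around
`[a, x] × [c, d]`. Then `Φ x - Φ x₀` is the integral around the thin column `[x₀, x] × [c, d]`.
As `ρ` is locally Lipschitz, the arc crosses this column inside a horizontal strip of height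
`O(|x - x₀|)`. The parts of the column above and below the strip contribute nothing by
Cauchy–Goursat, and on the strip `F` is nearly constant, so the strip contributes
`o(|x - x₀|)`. Hence `Φ' = 0`, and `Φ b = Φ a = 0`.
-/

open Complex Metric Set Filter Topology intervalIntegral
open scoped Interval

namespace Complex

/-- The integral of `f` around the boundary of `[a, b] ×ℂ [c, d]`, written as in
`Complex.wedgeIntegral_add_wedgeIntegral_eq`. -/
noncomputable def rectIntegral {E : Type*} [NormedAddCommGroup E] [NormedSpace ℂ E]
    (f : ℂ → E) (a b c d : ℝ) : E :=
  (∫ x in a..b, f (x + c * I)) - (∫ x in a..b, f (x + d * I)) +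
    I • (∫ y in c..d, f (b + y * I)) - I • (∫ y in c..d, f (a + y * I))

theorem ofReal_add_ofReal_mul_I_mem_reProdIm {s t : Set ℝ} {x y : ℝ} (hx : x ∈ s) (hy : y ∈ t) :
    (x + y * I : ℂ) ∈ s ×ℂ t := by
  simp [mem_reProdIm, hx, hy]

theorem reProdIm_uIcc_subset {a b c d a' b' c' d' : ℝ} (ha : a' ∈ [[a, b]]) (hb : b' ∈ [[a, b]])
    (hc : c' ∈ [[c, d]]) (hd : d' ∈ [[c, d]]) : [[a', b']] ×ℂ [[c', d']] ⊆ [[a, b]] ×ℂ [[c, d]] :=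
  reProdIm_subset_iff.2 (prod_mono (uIcc_subset_uIcc ha hb) (uIcc_subset_uIcc hc hd))

theorem dist_le_abs_re_add_abs_im (z w : ℂ) : dist z w ≤ |z.re - w.re| + |z.im - w.im| := by
  simpa [dist_eq] using norm_le_abs_re_add_abs_im (z - w)

theorem max_min_mem_uIcc {c d : ℝ} (hcd : c ≤ d) (r : ℝ) : max c (min d r) ∈ [[c, d]] := by
  rw [uIcc_of_le hcd]
  exact (projIcc c d hcd r).2

theorem dist_le_of_mem_band {s t c d r h : ℝ} {z : ℂ} (hcd : c ≤ d) (hh : 0 ≤ h)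
    (hz : z ∈ [[s, t]] ×ℂ [[max c (min d (r - h)), max c (min d (r + h))]]) :
    dist z (s + max c (min d r) * I) ≤ |t - s| + 2 * h := by
  obtain ⟨hzre, hzim⟩ := hz
  rw [mem_preimage, uIcc_of_le (by grind), mem_Icc] at hzim
  refine (dist_le_abs_re_add_abs_im _ _).trans (add_le_add ?_ ?_)
  · simpa using abs_sub_left_of_mem_uIcc hzre
  · simp only [add_im, ofReal_im, mul_im, ofReal_re, I_im, I_re]
    rw [abs_le]
    constructor <;> grind

section

variable {E : Type*} [NormedAddCommGroup E] {f : ℂ → E} {a b c d : ℝ}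

theorem _root_.ContinuousOn.intervalIntegrable_horizontal
    (hf : ContinuousOn f ([[a, b]] ×ℂ [[c, d]])) {y : ℝ} (hy : y ∈ [[c, d]]) :
    IntervalIntegrable (fun x : ℝ => f (x + y * I)) MeasureTheory.volume a b :=
  (hf.comp (by fun_prop) fun _ hx => ofReal_add_ofReal_mul_I_mem_reProdIm hx hy).intervalIntegrable

theorem _root_.ContinuousOn.intervalIntegrable_vertical
    (hf : ContinuousOn f ([[a, b]] ×ℂ [[c, d]])) {x : ℝ} (hx : x ∈ [[a, b]]) :
    IntervalIntegrable (fun y : ℝ => f (x + y * I)) MeasureTheory.volume c d :=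
  (hf.comp (by fun_prop) fun _ hy => ofReal_add_ofReal_mul_I_mem_reProdIm hx hy).intervalIntegrable

variable [NormedSpace ℂ E]

theorem rectIntegral_self_re (f : ℂ → E) (a c d : ℝ) : rectIntegral f a a c d = 0 := by
  simp [rectIntegral]

theorem rectIntegral_swap_im (f : ℂ → E) (a b c d : ℝ) :
    rectIntegral f a b d c = -rectIntegral f a b c d := by
  simp only [rectIntegral, integral_symm d c, smul_neg]
  abel

theorem rectIntegral_add_adjacent_re {m : ℝ} (hf₁ : ContinuousOn f ([[a, m]] ×ℂ [[c, d]]))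
    (hf₂ : ContinuousOn f ([[m, b]] ×ℂ [[c, d]])) :
    rectIntegral f a m c d + rectIntegral f m b c d = rectIntegral f a b c d := by
  simp only [rectIntegral,
    ← integral_add_adjacent_intervals (hf₁.intervalIntegrable_horizontal left_mem_uIcc)
      (hf₂.intervalIntegrable_horizontal left_mem_uIcc),
    ← integral_add_adjacent_intervals (hf₁.intervalIntegrable_horizontal right_mem_uIcc)
      (hf₂.intervalIntegrable_horizontal right_mem_uIcc)]
  abel

theorem rectIntegral_add_adjacent_im {m : ℝ} (hf₁ : ContinuousOn f ([[a, b]] ×ℂ [[c, m]]))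
    (hf₂ : ContinuousOn f ([[a, b]] ×ℂ [[m, d]])) :
    rectIntegral f a b c m + rectIntegral f a b m d = rectIntegral f a b c d := by
  simp only [rectIntegral,
    ← integral_add_adjacent_intervals (hf₁.intervalIntegrable_vertical left_mem_uIcc)
      (hf₂.intervalIntegrable_vertical left_mem_uIcc),
    ← integral_add_adjacent_intervals (hf₁.intervalIntegrable_vertical right_mem_uIcc)
      (hf₂.intervalIntegrable_vertical right_mem_uIcc), smul_add]
  abel

theorem rectIntegral_eq_zero_of_differentiableOn (hf : ContinuousOn f ([[a, b]] ×ℂ [[c, d]]))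
    (hd : DifferentiableOn ℂ f (Ioo (min a b) (max a b) ×ℂ Ioo (min c d) (max c d))) :
    rectIntegral f a b c d = 0 := by
  simpa [rectIntegral] using integral_boundary_rect_eq_zero_of_continuousOn_of_differentiableOn f
    (a + c * I) (b + d * I) (by simpa using hf) (by simpa using hd)

theorem rectIntegral_sub_const (hf : ContinuousOn f ([[a, b]] ×ℂ [[c, d]])) (k : E) :
    rectIntegral (fun z => f z - k) a b c d = rectIntegral f a b c d := by
  simp only [rectIntegral,
    integral_sub (hf.intervalIntegrable_horizontal left_mem_uIcc) intervalIntegrable_const,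
    integral_sub (hf.intervalIntegrable_horizontal right_mem_uIcc) intervalIntegrable_const,
    integral_sub (hf.intervalIntegrable_vertical left_mem_uIcc) intervalIntegrable_const,
    integral_sub (hf.intervalIntegrable_vertical right_mem_uIcc) intervalIntegrable_const,
    smul_sub]
  abel

theorem norm_rectIntegral_le {ε : ℝ} (hf : ∀ z ∈ [[a, b]] ×ℂ [[c, d]], ‖f z‖ ≤ ε) :
    ‖rectIntegral f a b c d‖ ≤ 2 * ε * (|b - a| + |d - c|) := by
  have horiz : ∀ y ∈ [[c, d]], ‖∫ x in a..b, f (x + y * I)‖ ≤ ε * |b - a| := fun y hy =>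
    norm_integral_le_of_norm_le_const fun x hx =>
      hf _ (ofReal_add_ofReal_mul_I_mem_reProdIm (uIoc_subset_uIcc hx) hy)
  have vert : ∀ x ∈ [[a, b]], ‖I • ∫ y in c..d, f (x + y * I)‖ ≤ ε * |d - c| := fun x hx => by
    rw [norm_smul, norm_I, one_mul]
    exact norm_integral_le_of_norm_le_const fun y hy =>
      hf _ (ofReal_add_ofReal_mul_I_mem_reProdIm hx (uIoc_subset_uIcc hy))
  calc ‖rectIntegral f a b c d‖
      ≤ ε * |b - a| + ε * |b - a| + ε * |d - c| + ε * |d - c| :=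
        norm_sub_le_of_le (norm_add_le_of_le (norm_sub_le_of_le (horiz c left_mem_uIcc)
          (horiz d right_mem_uIcc)) (vert b right_mem_uIcc)) (vert a left_mem_uIcc)
    _ = 2 * ε * (|b - a| + |d - c|) := by ring

theorem norm_rectIntegral_le_of_differentiableOn_off_strip {p q ε : ℝ} {k : E}
    (hcp : c ≤ p) (hpq : p ≤ q) (hqd : q ≤ d) (hf : ContinuousOn f ([[a, b]] ×ℂ [[c, d]]))
    (hbelow : DifferentiableOn ℂ f (Ioo (min a b) (max a b) ×ℂ Ioo c p))
    (habove : DifferentiableOn ℂ f (Ioo (min a b) (max a b) ×ℂ Ioo q d))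
    (hk : ∀ z ∈ [[a, b]] ×ℂ [[p, q]], ‖f z - k‖ ≤ ε) :
    ‖rectIntegral f a b c d‖ ≤ 2 * ε * (|b - a| + (q - p)) := by
  have hp : p ∈ [[c, d]] := by rw [uIcc_of_le (by linarith)]; exact ⟨hcp, hpq.trans hqd⟩
  have hq : q ∈ [[c, d]] := by rw [uIcc_of_le (by linarith)]; exact ⟨hcp.trans hpq, hqd⟩
  have hcont : ∀ {c' d'}, c' ∈ [[c, d]] → d' ∈ [[c, d]] →
      ContinuousOn f ([[a, b]] ×ℂ [[c', d']]) :=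
    fun hc' hd' => hf.mono (reProdIm_uIcc_subset left_mem_uIcc right_mem_uIcc hc' hd')
  have hlow : rectIntegral f a b c p = 0 := rectIntegral_eq_zero_of_differentiableOn
    (hcont left_mem_uIcc hp) (by rwa [min_eq_left hcp, max_eq_right hcp])
  have hup : rectIntegral f a b q d = 0 := rectIntegral_eq_zero_of_differentiableOn
    (hcont hq right_mem_uIcc) (by rwa [min_eq_left hqd, max_eq_right hqd])
  have hmid : ‖rectIntegral f a b p q‖ ≤ 2 * ε * (|b - a| + (q - p)) := by
    rw [← rectIntegral_sub_const (hcont hp hq) k, ← abs_of_nonneg (sub_nonneg.2 hpq)]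
    exact norm_rectIntegral_le hk
  rwa [← rectIntegral_add_adjacent_im (hcont left_mem_uIcc hp) (hcont hp right_mem_uIcc),
    ← rectIntegral_add_adjacent_im (hcont hp hq) (hcont hq right_mem_uIcc), hlow, hup, zero_add,
    add_zero]

variable {ρ : ℝ → ℝ}

theorem norm_rectIntegral_le_of_graph_mem_band {r h ε : ℝ} {k : E} (hcd : c ≤ d) (hh : 0 ≤ h)
    (hf : ContinuousOn f ([[a, b]] ×ℂ [[c, d]]))
    (hfd : ∀ z ∈ Ioo (min a b) (max a b) ×ℂ Ioo c d, z.im ≠ ρ z.re → DifferentiableAt ℂ f z)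
    (hρ : ∀ x ∈ Ioo (min a b) (max a b), |ρ x - r| ≤ h)
    (hk : ∀ z ∈ [[a, b]] ×ℂ [[max c (min d (r - h)), max c (min d (r + h))]], ‖f z - k‖ ≤ ε) :
    ‖rectIntegral f a b c d‖ ≤ 2 * ε * (|b - a| + 2 * h) := by
  set p := max c (min d (r - h))
  set q := max c (min d (r + h))
  have hε : 0 ≤ ε := (norm_nonneg _).trans
    (hk _ (ofReal_add_ofReal_mul_I_mem_reProdIm left_mem_uIcc left_mem_uIcc))
  have hdiff : ∀ {c' d'}, c ≤ c' → d' ≤ d → (∀ x ∈ Ioo (min a b) (max a b), ρ x ∉ Ioo c' d') →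
      DifferentiableOn ℂ f (Ioo (min a b) (max a b) ×ℂ Ioo c' d') := by
    intro c' d' hc' hd' havoid z ⟨hzre, hzim⟩
    refine (hfd z ⟨hzre, ?_, ?_⟩ ?_).differentiableWithinAt
    · exact hc'.trans_lt hzim.1
    · exact hzim.2.trans_le hd'
    · exact fun heq => havoid _ hzre (heq ▸ hzim)
  calc ‖rectIntegral f a b c d‖ ≤ 2 * ε * (|b - a| + (q - p)) := by
        refine norm_rectIntegral_le_of_differentiableOn_off_strip (by grind) (by grind) (by grind)
          hf (hdiff le_rfl (by grind) fun x hx hρx => ?_)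
          (hdiff (by grind) le_rfl fun x hx hρx => ?_) hk
        · have := abs_le.1 (hρ x hx); grind
        · have := abs_le.1 (hρ x hx); grind
    _ ≤ 2 * ε * (|b - a| + 2 * h) := by gcongr; grind

theorem hasDerivWithinAt_rectIntegral_re (hρ : LocallyLipschitz ρ) (hcd : c ≤ d)
    (hf : ContinuousOn f ([[a, b]] ×ℂ [[c, d]]))
    (hfd : ∀ z ∈ Ioo (min a b) (max a b) ×ℂ Ioo c d, z.im ≠ ρ z.re → DifferentiableAt ℂ f z)
    {x₀ : ℝ} (hx₀ : x₀ ∈ [[a, b]]) :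
    HasDerivWithinAt (fun x => rectIntegral f a x c d) 0 [[a, b]] x₀ := by
  rw [hasDerivWithinAt_iff_isLittleO, Asymptotics.isLittleO_iff]
  intro ε hε
  obtain ⟨L, U, hU, hL⟩ := hρ x₀
  obtain ⟨δ₁, hδ₁, hδ₁U⟩ := Metric.mem_nhds_iff.1 hU
  -- `f` is nearly constant near the point of the edge `re = x₀` closest to the arc
  set z₀ : ℂ := x₀ + max c (min d (ρ x₀)) * I
  have hz₀ : z₀ ∈ [[a, b]] ×ℂ [[c, d]] :=
    ofReal_add_ofReal_mul_I_mem_reProdIm hx₀ (max_min_mem_uIcc hcd _)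
  have hC : 0 < 2 * (1 + 2 * (L : ℝ)) := by positivity
  obtain ⟨δ₂, hδ₂, hfz₀⟩ := Metric.continuousWithinAt_iff.1 (hf z₀ hz₀) _ (div_pos hε hC)
  have hδ : 0 < min δ₁ (δ₂ / (1 + 2 * L)) := lt_min hδ₁ (div_pos hδ₂ (by positivity))
  filter_upwards [self_mem_nhdsWithin, nhdsWithin_le_nhds (ball_mem_nhds x₀ hδ)] with x hx hxδ
  rw [mem_ball, Real.dist_eq, lt_min_iff, lt_div_iff₀ (by positivity)] at hxδ
  have hcol : ContinuousOn f ([[x₀, x]] ×ℂ [[c, d]]) :=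
    hf.mono (reProdIm_uIcc_subset hx₀ hx left_mem_uIcc right_mem_uIcc)
  have hlip : ∀ y ∈ [[x₀, x]], |ρ y - ρ x₀| ≤ L * |x - x₀| := fun y hy => by
    have hyx₀ : |y - x₀| ≤ |x - x₀| := abs_sub_left_of_mem_uIcc hy
    have hyU : y ∈ U := hδ₁U (by rw [mem_ball, Real.dist_eq]; linarith [hxδ.1])
    simpa [Real.dist_eq] using (hL.dist_le_mul y hyU x₀ (hδ₁U (mem_ball_self hδ₁))).trans
      (mul_le_mul_of_nonneg_left (by rwa [Real.dist_eq]) L.2)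
  have hLx : 0 ≤ L * |x - x₀| := by positivity
  have hband := norm_rectIntegral_le_of_graph_mem_band (k := f z₀) hcd hLx hcol
    (fun z hz => hfd z ⟨Ioo_subset_Ioo (le_min hx₀.1 hx.1) (max_le hx₀.2 hx.2) hz.1, hz.2⟩)
    (fun y hy => hlip y (Ioo_subset_Icc_self hy)) fun z hz => by
      rw [← dist_eq_norm]
      refine (hfz₀ (reProdIm_uIcc_subset hx₀ hx (max_min_mem_uIcc hcd _)
        (max_min_mem_uIcc hcd _) hz) ((dist_le_of_mem_band hcd hLx hz).trans_lt ?_)).le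
      linarith [hxδ.2]
  simp only [smul_zero, sub_zero, Real.norm_eq_abs]
  rw [← rectIntegral_add_adjacent_re (hf.mono (reProdIm_uIcc_subset left_mem_uIcc hx₀
    left_mem_uIcc right_mem_uIcc)) hcol, add_sub_cancel_left]
  calc ‖rectIntegral f x₀ x c d‖ ≤ _ := hband
    _ = ε * |x - x₀| := by field_simp

theorem rectIntegral_eq_zero_of_differentiableAt_off_graph (hρ : LocallyLipschitz ρ)
    (hf : ContinuousOn f ([[a, b]] ×ℂ [[c, d]]))
    (hfd : ∀ z ∈ Ioo (min a b) (max a b) ×ℂ Ioo (min c d) (max c d), z.im ≠ ρ z.re →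
      DifferentiableAt ℂ f z) :
    rectIntegral f a b c d = 0 := by
  wlog hcd : c ≤ d generalizing c d
  · rw [← neg_eq_zero, ← rectIntegral_swap_im]
    exact this (by rwa [uIcc_comm d c]) (by rwa [min_comm d c, max_comm d c]) (le_of_not_ge hcd)
  rw [min_eq_left hcd, max_eq_right hcd] at hfd
  have hconst := Convex.norm_image_sub_le_of_norm_hasDerivWithin_le
    (fun x hx => hasDerivWithinAt_rectIntegral_re hρ hcd hf hfd hx) (fun _ _ => norm_zero.le)
    (convex_uIcc a b) left_mem_uIcc right_mem_uIcc
  simpa [rectIntegral_self_re] using hconst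

end

end Complex

theorem holomorphic_across_smooth_arc_general
    (c : ℂ) (R : ℝ) (ρ : ℝ → ℝ) (hρ : ContDiff ℝ 1 ρ)
    (F : ℂ → ℂ) (hFc : ContinuousOn F (ball c R))
    (hFd : ∀ z ∈ ball c R, z.im ≠ ρ z.re → DifferentiableAt ℂ F z) :
    DifferentiableOn ℂ F (ball c R) := by
  refine (isConservativeOn_and_continuousOn_iff_isDifferentiableOn isOpen_ball).1
    ⟨fun z w hzw => ?_, hFc⟩
  rw [← add_eq_zero_iff_eq_neg, wedgeIntegral_add_wedgeIntegral_eq]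
  exact rectIntegral_eq_zero_of_differentiableAt_off_graph hρ.locallyLipschitz (hFc.mono hzw)
    fun z hz => hFd z (hzw (reProdIm_subset_iff.2 (prod_mono Ioo_subset_Icc_self
      Ioo_subset_Icc_self) hz))

/-- A function continuous on an open disc and holomorphic off a smooth arc
(the graph of a C¹ function) is holomorphic on the whole disc. -/
theorem holomorphic_across_smooth_arc
    (c : ℂ) (R : ℝ) (hR : 0 < R) (ρ : ℝ → ℝ) (hρ : ContDiff ℝ 1 ρ)
    (F : ℂ → ℂ) (hFc : ContinuousOn F (ball c R))
    (hFd : ∀ z ∈ ball c R, z.im ≠ ρ z.re → DifferentiableAt ℂ F z) :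
    DifferentiableOn ℂ F (ball c R) :=
  holomorphic_across_smooth_arc_general c R ρ hρ F hFc hFd
end

section
/- Let F: D → ℂ be holomorphic on an open set D ⊂ ℂ, write F = x + iy with x, y real, and let z = η + iζ. Let a(η,ζ) = −(1/2)ln((η²+ζ²)ⁿ(1 + x² + y²)) and θ(η,ζ) = n·arg(z). Then on D \ {0}: ∂a/∂ζ = ∂θ/∂η + (x ∂y/∂η − y ∂x/∂η)/(1 + x² + y²) and ∂a/∂η = −[∂θ/∂ζ + (x ∂y/∂ζ − y ∂x/∂ζ)/(1 + x² + y²)]. -/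
/-!
Where `arg` is differentiable, `log z = log ‖z‖ + i arg z` is holomorphic with derivative `z⁻¹`
(differentiate `exp ∘ log = id`). Away from `0`, `a = -Re G - ½ log (1 + |F|²)` and `θ = Im G`
with `G = n log z`, so the contact Cauchy–Riemann equations reduce to the Cauchy–Riemann
equations of `G` and of `F`.
-/

open Complex

theorem Complex.differentiableAt_log_of_differentiableAt_arg {z : ℂ} (hz : z ≠ 0)
    (harg : DifferentiableAt ℝ arg z) : DifferentiableAt ℝ log z := by
  have hnorm : DifferentiableAt ℝ (fun w : ℂ => Real.log ‖w‖) z :=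
    (differentiableAt_id.norm ℝ hz).log (norm_ne_zero_iff.mpr hz)
  rw [show log = fun w => (Real.log ‖w‖ : ℂ) + (arg w : ℂ) * I from funext fun _ => rfl]
  exact (ofRealCLM.differentiableAt.comp z hnorm).add
    ((ofRealCLM.differentiableAt.comp z harg).mul_const I)

theorem Complex.hasDerivAt_log_of_differentiableAt_arg {z : ℂ} (hz : z ≠ 0)
    (harg : DifferentiableAt ℝ arg z) : HasDerivAt log z⁻¹ z := by
  have hlog := (differentiableAt_log_of_differentiableAt_arg hz harg).hasFDerivAt
  have hexp : HasFDerivAt (fun w => exp (log w)) (z • fderiv ℝ log z) z := by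
    simpa [exp_log hz] using hlog.cexp
  have hid : z • fderiv ℝ log z = ContinuousLinearMap.id ℝ ℂ :=
    (hexp.congr_of_eventuallyEq ((eventually_ne_nhds hz).mono fun w hw => (exp_log hw).symm)).unique
      (hasFDerivAt_id z)
  have hderiv : fderiv ℝ log z = z⁻¹ • ContinuousLinearMap.id ℝ ℂ := by
    rw [← hid, smul_smul, inv_mul_cancel₀ hz, one_smul]
  refine hasDerivAt_iff_hasFDerivAt.mpr (hasFDerivAt_of_restrictScalars ℝ hlog ?_)
  ext1 v
  simp [hderiv, mul_comm]

theorem Complex.re_sq_add_im_sq_eq_sq_norm (w : ℂ) : w.re ^ 2 + w.im ^ 2 = ‖w‖ ^ 2 := by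
  rw [Complex.sq_norm, normSq_apply]
  ring

theorem Complex.log_re_sq_add_im_sq (w : ℂ) : Real.log (w.re ^ 2 + w.im ^ 2) = 2 * (log w).re := by
  rw [re_sq_add_im_sq_eq_sq_norm, Real.log_pow, log_re]
  push_cast
  ring

theorem HasDerivAt.fderiv_re_apply {G : ℂ → ℂ} {c z : ℂ} (h : HasDerivAt G c z) (v : ℂ) :
    fderiv ℝ (fun w => (G w).re) z v = (c * v).re := by
  have hre : HasFDerivAt (fun w => (G w).re) _ z :=
    reCLM.hasFDerivAt.comp z (h.hasFDerivAt.restrictScalars ℝ)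
  simp [hre.fderiv, mul_comm]

theorem HasDerivAt.fderiv_im_apply {G : ℂ → ℂ} {c z : ℂ} (h : HasDerivAt G c z) (v : ℂ) :
    fderiv ℝ (fun w => (G w).im) z v = (c * v).im := by
  have him : HasFDerivAt (fun w => (G w).im) _ z :=
    imCLM.hasFDerivAt.comp z (h.hasFDerivAt.restrictScalars ℝ)
  simp [him.fderiv, mul_comm]

theorem fderiv_log_one_add_sq_add_sq_apply {E : Type*} [NormedAddCommGroup E] [NormedSpace ℝ E]
    {X Y : E → ℝ} {z : E} (hX : DifferentiableAt ℝ X z) (hY : DifferentiableAt ℝ Y z) (v : E) :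
    fderiv ℝ (fun w => Real.log (1 + X w ^ 2 + Y w ^ 2)) z v =
      2 * (X z * fderiv ℝ X z v + Y z * fderiv ℝ Y z v) / (1 + X z ^ 2 + Y z ^ 2) := by
  have hQ : 1 + X z ^ 2 + Y z ^ 2 ≠ 0 := by positivity
  have hlog : HasFDerivAt (fun w => Real.log (1 + X w ^ 2 + Y w ^ 2)) _ z :=
    (((hX.hasFDerivAt.pow 2).const_add 1).add (hY.hasFDerivAt.pow 2)).log hQ
  simp only [hlog.fderiv, Pi.add_apply, Nat.add_one_sub_one, pow_one, nsmul_eq_mul, Nat.cast_ofNat,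
    smul_add, add_apply, smul_apply, smul_eq_mul]
  ring

/-- With `z = η + iζ`, the directions `1` and `I` are `∂_η` and `∂_ζ`: these are
`λ(Ψ_η) = a_ζ` and `λ(Ψ_ζ) = -a_η` for `Ψ = (x, y, θ)` in the Martinet tube. -/
def IsContactCRAt (a θ x y : ℂ → ℝ) (z : ℂ) : Prop :=
  fderiv ℝ a z I = fderiv ℝ θ z 1 +
      (x z * fderiv ℝ y z 1 - y z * fderiv ℝ x z 1) / (1 + x z ^ 2 + y z ^ 2) ∧
    fderiv ℝ a z 1 = -(fderiv ℝ θ z I +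
      (x z * fderiv ℝ y z I - y z * fderiv ℝ x z I) / (1 + x z ^ 2 + y z ^ 2))

theorem IsContactCRAt.congr_of_eventuallyEq {a a' θ x y : ℂ → ℝ} {z : ℂ}
    (h : IsContactCRAt a θ x y z) (ha : a' =ᶠ[nhds z] a) : IsContactCRAt a' θ x y z := by
  rwa [IsContactCRAt, ha.fderiv_eq]

theorem isContactCRAt_of_hasDerivAt {G F : ℂ → ℂ} {g c z : ℂ}
    (hG : HasDerivAt G g z) (hF : HasDerivAt F c z) :
    IsContactCRAt (fun w => -(G w).re - Real.log (1 + (F w).re ^ 2 + (F w).im ^ 2) / 2)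
      (fun w => (G w).im) (fun w => (F w).re) (fun w => (F w).im) z := by
  have hG' : DifferentiableAt ℝ G z := hG.differentiableAt.restrictScalars ℝ
  have hF' : DifferentiableAt ℝ F z := hF.differentiableAt.restrictScalars ℝ
  have hx : DifferentiableAt ℝ (fun w => (F w).re) z := by fun_prop
  have hy : DifferentiableAt ℝ (fun w => (F w).im) z := by fun_prop
  have hQ : DifferentiableAt ℝ (fun w => Real.log (1 + (F w).re ^ 2 + (F w).im ^ 2)) z :=
    by fun_prop (disch := positivity)
  have ha v :
      fderiv ℝ (fun w => -(G w).re - Real.log (1 + (F w).re ^ 2 + (F w).im ^ 2) / 2) z v =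
        -(g * v).re - ((F z).re * (c * v).re + (F z).im * (c * v).im) /
          (1 + (F z).re ^ 2 + (F z).im ^ 2) := by
    simp only [div_eq_mul_inv]
    rw [fderiv_fun_sub (by fun_prop) (by fun_prop), fderiv_fun_neg, fderiv_mul_const hQ]
    simp only [sub_apply, neg_apply, smul_apply, smul_eq_mul, hG.fderiv_re_apply,
      fderiv_log_one_add_sq_add_sq_apply hx hy, hF.fderiv_re_apply, hF.fderiv_im_apply,
      mul_re, mul_im]
    ring
  constructor <;>
  · simp only [ha, hG.fderiv_im_apply, hF.fderiv_re_apply, hF.fderiv_im_apply, mul_re, mul_im,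
      I_re, I_im, one_re, one_im]
    ring

theorem contact_CR_equations_hopf_general
    (D : Set ℂ) (hD : IsOpen D) (F : ℂ → ℂ) (hF : DifferentiableOn ℂ F D)
    (n : ℕ)
    (A Θ X Y : ℂ → ℝ)
    (hA : ∀ z, A z = -(1 / 2) * Real.log ((z.re ^ 2 + z.im ^ 2) ^ n *
      (1 + (F z).re ^ 2 + (F z).im ^ 2)))
    (hΘ : ∀ z, Θ z = n * Complex.arg z)
    (hX : ∀ z, X z = (F z).re) (hY : ∀ z, Y z = (F z).im)
    (z : ℂ) (hz : z ∈ D) (hz0 : z ≠ 0)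
    (harg : DifferentiableAt ℝ Complex.arg z) :
    fderiv ℝ A z Complex.I =
      fderiv ℝ Θ z 1 +
        (X z * fderiv ℝ Y z 1 - Y z * fderiv ℝ X z 1) /
          (1 + X z ^ 2 + Y z ^ 2) ∧
    fderiv ℝ A z 1 =
      -(fderiv ℝ Θ z Complex.I +
        (X z * fderiv ℝ Y z Complex.I - Y z * fderiv ℝ X z Complex.I) /
          (1 + X z ^ 2 + Y z ^ 2)) := by
  have hlog : HasDerivAt (fun w => n * log w) (n * z⁻¹) z :=
    (hasDerivAt_log_of_differentiableAt_arg hz0 harg).const_mul _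
  have hFz : HasDerivAt F (deriv F z) z := (hF.differentiableAt (hD.mem_nhds hz)).hasDerivAt
  obtain rfl : X = fun w => (F w).re := funext hX
  obtain rfl : Y = fun w => (F w).im := funext hY
  obtain rfl : Θ = fun w => (n * log w).im := funext fun w => by simp [hΘ, log_im]
  refine (isContactCRAt_of_hasDerivAt hlog hFz).congr_of_eventuallyEq ?_
  filter_upwards [eventually_ne_nhds hz0] with w hw
  have hB : w.re ^ 2 + w.im ^ 2 ≠ 0 := by
    rw [re_sq_add_im_sq_eq_sq_norm]
    exact pow_ne_zero 2 (norm_ne_zero_iff.mpr hw)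
  rw [hA, Real.log_mul (pow_ne_zero n hB) (by positivity), Real.log_pow, log_re_sq_add_im_sq]
  simp only [mul_re, natCast_re, natCast_im, zero_mul, sub_zero]
  ring

/-- Contact Cauchy–Riemann equations for the curve `(zⁿ, zⁿF(z))` in Hopf
coordinates: with `F` holomorphic, `x = Re F`, `y = Im F`,
`a = −(1/2)ln((η²+ζ²)ⁿ(1+x²+y²))` and `θ = n·arg z`, one has
`a_ζ = θ_η + (x y_η − y x_η)/(1+x²+y²)` and
`a_η = −(θ_ζ + (x y_ζ − y x_ζ)/(1+x²+y²))` on `D \ {0}`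
(at points where `arg` is differentiable). -/
theorem contact_CR_equations_hopf
    (D : Set ℂ) (hD : IsOpen D) (F : ℂ → ℂ) (hF : DifferentiableOn ℂ F D)
    (n : ℕ) (hn : 0 < n)
    (A Θ X Y : ℂ → ℝ)
    (hA : ∀ z, A z = -(1 / 2) * Real.log ((z.re ^ 2 + z.im ^ 2) ^ n *
      (1 + (F z).re ^ 2 + (F z).im ^ 2)))
    (hΘ : ∀ z, Θ z = n * Complex.arg z)
    (hX : ∀ z, X z = (F z).re) (hY : ∀ z, Y z = (F z).im)
    (z : ℂ) (hz : z ∈ D) (hz0 : z ≠ 0)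
    (harg : DifferentiableAt ℝ Complex.arg z) :
    fderiv ℝ A z Complex.I =
      fderiv ℝ Θ z 1 +
        (X z * fderiv ℝ Y z 1 - Y z * fderiv ℝ X z 1) /
          (1 + X z ^ 2 + Y z ^ 2) ∧
    fderiv ℝ A z 1 =
      -(fderiv ℝ Θ z Complex.I +
        (X z * fderiv ℝ Y z Complex.I - Y z * fderiv ℝ X z Complex.I) /
          (1 + X z ^ 2 + Y z ^ 2)) :=
  contact_CR_equations_hopf_general D hD F hF n A Θ X Y hA hΘ hX hY z hz hz0 harg
end
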